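/- Let G ≤ Equiv.Perm (Fin n) be a subgroup. Then the number of elements h ∈ G with h ≠ 1 that are indecomposable in G equals the number of edges of P(G) containing the vertex M(1), i.e. Set.ncard {h ∈ G | h ≠ 1 ∧ h is indecomposable in G} = Set.ncard {F : Set (Matrix (Fin n) (Fin n) ℝ) | IsExposed ℝ (P(G)) F ∧ M(1) ∈ F ∧ Module.finrank ℝ (vectorSpan ℝ F) = 1}. -/

import Mathlib

/-- The permutation polytope of a subgroup `G` of permutations of `Fin n`:
the convex hull of the permutation matrices of elements of `G`. -/
noncomputable def permPolytope (n : ℕ) (G : Subgroup (Equiv.Perm (Fin n))) :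
    Set (Matrix (Fin n) (Fin n) ℝ) :=
  convexHull ℝ {M : Matrix (Fin n) (Fin n) ℝ | ∃ σ ∈ G, M = σ.permMatrix ℝ}

/-- `h` is a subelement of `z` if `z = h * k` for some permutation `k` disjoint from `h`. -/
def IsSubelement {n : ℕ} (h z : Equiv.Perm (Fin n)) : Prop :=
  ∃ k : Equiv.Perm (Fin n), h.Disjoint k ∧ z = h * k

/-- `z` is decomposable in `G` if some subelement `h ∈ G` of `z` satisfies `h ≠ 1` and
`h ≠ z`. -/
def DecomposableIn {n : ℕ} (G : Subgroup (Equiv.Perm (Fin n)))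
    (z : Equiv.Perm (Fin n)) : Prop :=
  ∃ h ∈ G, IsSubelement h z ∧ h ≠ 1 ∧ h ≠ z

/-!
The vertices of `P(G)` are the permutation matrices of `G`, and no three permutation matrices
are collinear. If `z = h * k` with `h`, `k` disjoint, then `M(h) + M(k) = M(1) + M(z)`, so every
face containing `M(1)` and `M(z)` also contains `M(h)`: the segment `[M(1), M(z)]` can only be
exposed when `z` is indecomposable. Conversely, the functional `X ↦ ∑ⱼ (X j j + X j (z j))` is
maximised over permutation matrices exactly at the subelements of `z`, so for indecomposable `z`
it exposes `[M(1), M(z)]`. An edge through `M(1)` is the hull of the vertices it contains, which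
by non-collinearity are `M(1)` and one `M(z)`; hence `z ↦ [M(1), M(z)]` is the bijection.
-/

open Equiv Set

section Exposed

theorem ContinuousLinearMap.mem_toExposed_iff_of_mem {𝕜 E : Type*} [TopologicalSpace 𝕜]
    [Ring 𝕜] [PartialOrder 𝕜] [AddCommGroup E] [Module 𝕜 E] [TopologicalSpace E]
    {l : StrongDual 𝕜 E} {A : Set E} {x₀ x : E} (h₀ : x₀ ∈ l.toExposed A) :
    x ∈ l.toExposed A ↔ x ∈ A ∧ l x = l x₀ :=
  ⟨fun hx => ⟨hx.1, le_antisymm (h₀.2 x hx.1) (hx.2 x₀ h₀.1)⟩,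
    fun hx => ⟨hx.1, fun y hy => hx.2 ▸ h₀.2 y hy⟩⟩

variable {𝕜 E : Type*} [Field 𝕜] [LinearOrder 𝕜] [IsStrictOrderedRing 𝕜] [TopologicalSpace 𝕜]
  [AddCommGroup E] [Module 𝕜 E] [TopologicalSpace E] {A : Set E}

theorem ContinuousLinearMap.toExposed_convexHull {l : StrongDual 𝕜 E}
    (hA : (l.toExposed A).Nonempty) :
    l.toExposed (convexHull 𝕜 A) = convexHull 𝕜 (l.toExposed A) := by
  obtain ⟨x₀, h₀⟩ := hA
  have hle : ∀ y ∈ convexHull 𝕜 A, l y ≤ l x₀ :=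
    convexHull_min h₀.2 (convex_halfSpace_le l.isLinear _)
  have h₀' : x₀ ∈ l.toExposed (convexHull 𝕜 A) := ⟨subset_convexHull 𝕜 A h₀.1, hle⟩
  refine Subset.antisymm (fun x hx => ?_) (convexHull_min (fun x hx => ?_) ?_)
  · obtain ⟨ι, _, w, z, hw₀, hw₁, hz, rfl⟩ := mem_convexHull_iff_exists_fintype.1 hx.1
    have hlx : l (∑ i, w i • z i) = l x₀ := ((mem_toExposed_iff_of_mem h₀').1 hx).2
    have hslack : ∀ i, w i * (l x₀ - l (z i)) = 0 := by
      refine fun i => (Finset.sum_eq_zero_iff_of_nonneg fun i _ =>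
        mul_nonneg (hw₀ i) (sub_nonneg.2 (h₀.2 _ (hz i)))).1 ?_ i (Finset.mem_univ i)
      calc ∑ i, w i * (l x₀ - l (z i)) = l x₀ - l (∑ i, w i • z i) := by
            simp [mul_sub, Finset.sum_sub_distrib, ← Finset.sum_mul, hw₁]
        _ = 0 := by rw [hlx, sub_self]
    -- points of zero weight may be replaced by `x₀`, the others are maximisers
    classical
    refine mem_convexHull_of_exists_fintype w (fun i => if l (z i) = l x₀ then z i else x₀)
      hw₀ hw₁ (fun i => ?_) (Finset.sum_congr rfl fun i _ => ?_)
    · split_ifs with hi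
      exacts [(mem_toExposed_iff_of_mem h₀).2 ⟨hz i, hi⟩, h₀]
    · split_ifs with hi
      · rfl
      · rw [(mul_eq_zero.1 (hslack i)).resolve_right (sub_ne_zero.2 (Ne.symm hi)),
          zero_smul, zero_smul]
  · exact (mem_toExposed_iff_of_mem h₀').2
      ⟨subset_convexHull 𝕜 A hx.1, ((mem_toExposed_iff_of_mem h₀).1 hx).2⟩
  · exact ContinuousLinearMap.toExposed.isExposed.convex (convex_convexHull 𝕜 A)

theorem IsExposed.mem_of_add_eq_add {F : Set E} (hF : IsExposed 𝕜 A F) {a b c d : E}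
    (ha : a ∈ A) (hb : b ∈ A) (hc : c ∈ F) (hd : d ∈ F) (h : a + b = c + d) : a ∈ F := by
  obtain ⟨l, rfl⟩ := hF ⟨c, hc⟩
  have hsum : l a + l b = l c + l d := by rw [← map_add, h, map_add]
  exact ⟨ha, fun y hy => by linarith [hd.2 y hy, hc.2 b hb]⟩

end Exposed

theorem finrank_vectorSpan_segment {𝕜 E : Type*} [Field 𝕜] [LinearOrder 𝕜]
    [IsStrictOrderedRing 𝕜] [AddCommGroup E] [Module 𝕜 E] {a b : E} (hab : a ≠ b) :
    Module.finrank 𝕜 (vectorSpan 𝕜 (segment 𝕜 a b)) = 1 := by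
  rw [vectorSpan_segment, finrank_span_singleton (vsub_ne_zero.2 hab.symm)]

namespace Equiv.Perm

variable {α R : Type*} [DecidableEq α]

theorem permMatrix_apply [Zero R] [One R] (σ : Perm α) (i j : α) :
    σ.permMatrix R i j = if σ i = j then 1 else 0 := by
  simp [permMatrix, PEquiv.toMatrix_apply]

theorem permMatrix_injective [MulZeroOneClass R] [Nontrivial R] :
    Function.Injective fun σ : Perm α => σ.permMatrix R := fun σ τ h =>
  Equiv.ext fun i => Option.some_injective _ <| by
    simpa [Equiv.toPEquiv_apply] using PEquiv.ext_iff.1 (PEquiv.toMatrix_injective h) i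

theorem permMatrix_add_permMatrix_of_disjoint [AddCommMonoidWithOne R] {h k : Perm α}
    (hd : h.Disjoint k) : h.permMatrix R + k.permMatrix R = 1 + (h * k).permMatrix R := by
  ext i j
  simp only [Matrix.add_apply, permMatrix_apply, Matrix.one_apply, mul_apply]
  rcases hd i with hi | hi
  · rcases hd (k i) with hki | hki
    · simp [hi, hki]
    · simp [hi, k.injective hki]
  · simp [hi, add_comm]

theorem eq_or_eq_of_permMatrix_mem_affineSpan_pair [Ring R] [Nontrivial R] {σ τ ρ : Perm α}
    (h : σ.permMatrix R ∈ line[R, τ.permMatrix R, ρ.permMatrix R]) : σ = τ ∨ σ = ρ := by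
  obtain ⟨r, hr⟩ := mem_affineSpan_pair_iff_exists_lineMap_eq.1 h
  rw [AffineMap.lineMap_apply_module'] at hr
  refine or_iff_not_imp_left.2 fun hστ => ?_
  obtain ⟨i, hi⟩ := not_forall.1 (mt Equiv.ext hστ)
  -- the entry `(i, σ i)` reads `1 = r * M(ρ) i (σ i)`, which forces `r = 1`
  have hentry := congrFun (congrFun hr i) (σ i)
  simp only [Matrix.add_apply, Matrix.smul_apply, Matrix.sub_apply, permMatrix_apply,
    if_neg (Ne.symm hi), smul_eq_mul, sub_zero, add_zero] at hentry
  have hr1 : r = 1 := by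
    split_ifs at hentry
    · simpa using hentry
    · simp at hentry
  rw [hr1, one_smul, sub_add_cancel] at hr
  exact permMatrix_injective hr.symm

theorem eq_or_eq_of_permMatrix_mem_segment [Ring R] [PartialOrder R] [IsOrderedRing R]
    [Nontrivial R] {σ τ ρ : Perm α}
    (h : σ.permMatrix R ∈ segment R (τ.permMatrix R) (ρ.permMatrix R)) : σ = τ ∨ σ = ρ :=
  eq_or_eq_of_permMatrix_mem_affineSpan_pair <|
    convexHull_subset_affineSpan (𝕜 := R) _ (by rwa [convexHull_pair])

theorem injOn_segment_one_permMatrix :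
    InjOn (fun z : Perm α => segment ℝ ((1 : Perm α).permMatrix ℝ) (z.permMatrix ℝ))
      {z | z ≠ 1} := by
  intro z _ w hw hzw
  have hwz : w.permMatrix ℝ ∈ segment ℝ ((1 : Perm α).permMatrix ℝ) (z.permMatrix ℝ) :=
    (congrFun hzw _).mpr (right_mem_segment ℝ _ _)
  exact ((eq_or_eq_of_permMatrix_mem_segment hwz).resolve_left hw).symm

theorem permMatrix_apply_self_add_apply_le (z σ : Perm α) (j : α) :
    σ.permMatrix ℝ j j + σ.permMatrix ℝ j (z j) ≤
      (1 : Perm α).permMatrix ℝ j j + (1 : Perm α).permMatrix ℝ j (z j) := by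
  simp only [permMatrix_apply, one_apply]
  split_ifs <;> grind

theorem permMatrix_apply_self_add_apply_eq_iff (z σ : Perm α) (j : α) :
    σ.permMatrix ℝ j j + σ.permMatrix ℝ j (z j) =
      (1 : Perm α).permMatrix ℝ j j + (1 : Perm α).permMatrix ℝ j (z j) ↔
      σ j = j ∨ σ j = z j := by
  simp only [permMatrix_apply, one_apply]
  split_ifs <;> grind

end Equiv.Perm

section SubelementFunctional

variable {α : Type*} [Fintype α]

noncomputable def subelementFunctional (z : Perm α) : StrongDual ℝ (Matrix α α ℝ) :=
  LinearMap.toContinuousLinearMap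
    (∑ j, (Matrix.entryLinearMap ℝ ℝ j j + Matrix.entryLinearMap ℝ ℝ j (z j)))

theorem subelementFunctional_apply (z : Perm α) (X : Matrix α α ℝ) :
    subelementFunctional z X = ∑ j, (X j j + X j (z j)) := by
  simp [subelementFunctional]

variable [DecidableEq α]

theorem subelementFunctional_permMatrix_le (z σ : Perm α) :
    subelementFunctional z (σ.permMatrix ℝ) ≤
      subelementFunctional z ((1 : Perm α).permMatrix ℝ) := by
  simp only [subelementFunctional_apply]
  exact Finset.sum_le_sum fun j _ => Perm.permMatrix_apply_self_add_apply_le z σ j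

theorem subelementFunctional_permMatrix_eq_iff (z σ : Perm α) :
    subelementFunctional z (σ.permMatrix ℝ) = subelementFunctional z ((1 : Perm α).permMatrix ℝ) ↔
      ∀ j, σ j = j ∨ σ j = z j := by
  simp only [subelementFunctional_apply,
    Finset.sum_eq_sum_iff_of_le fun j _ => Perm.permMatrix_apply_self_add_apply_le z σ j,
    Finset.mem_univ, true_imp_iff, Perm.permMatrix_apply_self_add_apply_eq_iff]

end SubelementFunctional

section PermPolytope

variable {n : ℕ}

theorem isSubelement_iff {h z : Perm (Fin n)} :
    IsSubelement h z ↔ ∀ j, h j = j ∨ h j = z j := by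
  refine ⟨fun ⟨k, hd, hz⟩ j => hz ▸ (hd j).imp_right fun hj => by rw [Perm.mul_apply, hj],
    fun hp => ⟨h⁻¹ * z, fun j => (hp j).imp_right fun hj => ?_, by rw [mul_inv_cancel_left]⟩⟩
  rw [Perm.mul_apply, ← hj, Perm.inv_eq_iff_eq]

variable (G : Subgroup (Perm (Fin n)))

theorem permMatrix_mem_permPolytope {σ : Perm (Fin n)} (hσ : σ ∈ G) :
    σ.permMatrix ℝ ∈ permPolytope n G :=
  subset_convexHull ℝ _ ⟨σ, hσ, rfl⟩

theorem toExposed_permMatrices_subelementFunctional {z : Perm (Fin n)} (hz : z ∈ G)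
    (hind : ¬ DecomposableIn G z) :
    (subelementFunctional z).toExposed {M | ∃ σ ∈ G, M = σ.permMatrix ℝ} =
      {(1 : Perm (Fin n)).permMatrix ℝ, z.permMatrix ℝ} := by
  have h₁ : (1 : Perm (Fin n)).permMatrix ℝ ∈
      (subelementFunctional z).toExposed {M | ∃ σ ∈ G, M = σ.permMatrix ℝ} :=
    ⟨⟨1, G.one_mem, rfl⟩, by rintro _ ⟨σ, -, rfl⟩; exact subelementFunctional_permMatrix_le z σ⟩
  ext M
  rw [ContinuousLinearMap.mem_toExposed_iff_of_mem h₁]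
  constructor
  · rintro ⟨⟨σ, hσ, rfl⟩, hmax⟩
    have hsub : IsSubelement σ z :=
      isSubelement_iff.2 ((subelementFunctional_permMatrix_eq_iff z σ).1 hmax)
    by_contra hne
    simp only [mem_insert_iff, mem_singleton_iff] at hne
    exact hind ⟨σ, hσ, hsub, fun h => hne (Or.inl (h ▸ rfl)), fun h => hne (Or.inr (h ▸ rfl))⟩
  · rintro (rfl | rfl)
    · exact ⟨⟨1, G.one_mem, rfl⟩, rfl⟩
    · exact ⟨⟨z, hz, rfl⟩, (subelementFunctional_permMatrix_eq_iff z z).2 fun _ => Or.inr rfl⟩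

theorem isExposed_segment_iff_not_decomposableIn {z : Perm (Fin n)} (hz : z ∈ G) :
    IsExposed ℝ (permPolytope n G)
        (segment ℝ ((1 : Perm (Fin n)).permMatrix ℝ) (z.permMatrix ℝ)) ↔
      ¬ DecomposableIn G z := by
  constructor
  · rintro hF ⟨h, hh, ⟨k, hd, rfl⟩, hh1, hhz⟩
    have hk : k ∈ G := by simpa using G.mul_mem (G.inv_mem hh) hz
    have hmem :
        h.permMatrix ℝ ∈ segment ℝ ((1 : Perm (Fin n)).permMatrix ℝ) ((h * k).permMatrix ℝ) :=
      hF.mem_of_add_eq_add (permMatrix_mem_permPolytope G hh) (permMatrix_mem_permPolytope G hk)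
        (left_mem_segment ℝ _ _) (right_mem_segment ℝ _ _)
        (by rw [Matrix.permMatrix_one, Perm.permMatrix_add_permMatrix_of_disjoint hd])
    exact (Perm.eq_or_eq_of_permMatrix_mem_segment hmem).elim hh1 hhz
  · intro hind
    rw [← convexHull_pair, ← toExposed_permMatrices_subelementFunctional G hz hind, permPolytope,
      ← ContinuousLinearMap.toExposed_convexHull]
    · exact ContinuousLinearMap.toExposed.isExposed
    · rw [toExposed_permMatrices_subelementFunctional G hz hind]
      exact insert_nonempty _ _

theorem exists_eq_segment_of_isExposed {F : Set (Matrix (Fin n) (Fin n) ℝ)}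
    (hF : IsExposed ℝ (permPolytope n G) F) (h₁ : (1 : Perm (Fin n)).permMatrix ℝ ∈ F)
    (hrank : Module.finrank ℝ (vectorSpan ℝ F) = 1) :
    ∃ z ∈ G, z ≠ 1 ∧ F = segment ℝ ((1 : Perm (Fin n)).permMatrix ℝ) (z.permMatrix ℝ) := by
  obtain ⟨l, hl⟩ := hF ⟨_, h₁⟩
  set V := {M : Matrix (Fin n) (Fin n) ℝ | ∃ σ ∈ G, M = σ.permMatrix ℝ}
  have h₁V : (1 : Perm (Fin n)).permMatrix ℝ ∈ l.toExposed V :=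
    ⟨⟨1, G.one_mem, rfl⟩, fun y hy => (hl ▸ h₁).2 y (subset_convexHull ℝ V hy)⟩
  have hhull : F = convexHull ℝ (l.toExposed V) :=
    hl.trans (l.toExposed_convexHull ⟨_, h₁V⟩)
  obtain ⟨z, hz, hz1, hzV⟩ : ∃ z ∈ G, z ≠ 1 ∧ z.permMatrix ℝ ∈ l.toExposed V := by
    -- otherwise `F = {M(1)}` would have dimension `0`
    by_contra! hne
    have hV : l.toExposed V ⊆ {(1 : Perm (Fin n)).permMatrix ℝ} := by
      rintro _ ⟨⟨σ, hσ, rfl⟩, hmax⟩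
      by_cases hσ1 : σ = 1
      · exact hσ1 ▸ rfl
      · exact absurd ⟨⟨σ, hσ, rfl⟩, hmax⟩ (hne σ hσ hσ1)
    have hsub : F.Subsingleton := hhull ▸
      subsingleton_singleton.anti ((convexHull_mono hV).trans (convexHull_singleton _).subset)
    rw [vectorSpan_of_subsingleton ℝ hsub, finrank_bot] at hrank
    exact zero_ne_one hrank
  have hcol : Collinear ℝ F := collinear_iff_finrank_le_one.2 hrank.le
  have hV : l.toExposed V = {(1 : Perm (Fin n)).permMatrix ℝ, z.permMatrix ℝ} := by
    refine Subset.antisymm (fun M hM => ?_)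
      (insert_subset_iff.2 ⟨h₁V, singleton_subset_iff.2 hzV⟩)
    obtain ⟨σ, -, rfl⟩ := hM.1
    have hline := hcol.mem_affineSpan_of_mem_of_ne h₁ (hhull ▸ subset_convexHull ℝ _ hzV)
      (hhull ▸ subset_convexHull ℝ _ hM) fun h => hz1 (Perm.permMatrix_injective h).symm
    rcases Perm.eq_or_eq_of_permMatrix_mem_affineSpan_pair hline with rfl | rfl
    exacts [Or.inl rfl, Or.inr rfl]
  exact ⟨z, hz, hz1, by rw [hhull, hV, convexHull_pair]⟩

end PermPolytope

/-- The number of nontrivial indecomposable elements of `G` equals the number of edges of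
`P(G)` containing the vertex corresponding to the identity. -/
theorem ncard_indecomposable_eq_ncard_edges
    (n : ℕ) (G : Subgroup (Equiv.Perm (Fin n))) :
    Set.ncard {h : Equiv.Perm (Fin n) | h ∈ G ∧ h ≠ 1 ∧ ¬ DecomposableIn G h}
      = Set.ncard {F : Set (Matrix (Fin n) (Fin n) ℝ) |
          IsExposed ℝ (permPolytope n G) F ∧
          (1 : Equiv.Perm (Fin n)).permMatrix ℝ ∈ F ∧
          Module.finrank ℝ (vectorSpan ℝ F) = 1} := by
  have hedges : (fun z : Perm (Fin n) =>
      segment ℝ ((1 : Perm (Fin n)).permMatrix ℝ) (z.permMatrix ℝ)) ''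
        {h | h ∈ G ∧ h ≠ 1 ∧ ¬ DecomposableIn G h} =
      {F | IsExposed ℝ (permPolytope n G) F ∧ (1 : Perm (Fin n)).permMatrix ℝ ∈ F ∧
        Module.finrank ℝ (vectorSpan ℝ F) = 1} := by
    ext F
    constructor
    · rintro ⟨z, ⟨hz, hz1, hind⟩, rfl⟩
      exact ⟨(isExposed_segment_iff_not_decomposableIn G hz).2 hind, left_mem_segment ℝ _ _,
        finrank_vectorSpan_segment fun h => hz1 (Perm.permMatrix_injective h).symm⟩
    · rintro ⟨hF, h₁, hrank⟩
      obtain ⟨z, hz, hz1, rfl⟩ := exists_eq_segment_of_isExposed G hF h₁ hrank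
      exact ⟨z, ⟨hz, hz1, (isExposed_segment_iff_not_decomposableIn G hz).1 hF⟩, rfl⟩
  rw [← hedges, (Perm.injOn_segment_one_permMatrix.mono fun _ hz => hz.2.1).ncard_image]
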